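/- arXiv:2009.00412 — 9 statements merged into one kernel-verified Lean document; each statement's English description precedes it below -/
import Mathlib

section
/- The H1 quad equation (u−w)(v−z)+β−α=0 is 3D consistent: given initial values u, ũ, û, v and parameters α, β, λ, defining the three face values ṽ, v̂, ũ̂ by the H1 equation with appropriate parameter pairs (α,λ), (β,λ), (α,β) respectively, the three ways of computing the value at the opposite corner of the cube (from the remaining three faces) agree, whenever all denominators appearing are nonzero. -/
/-- 3D consistency of the H1 equation `(u-w)(v-z)+β-α = 0`. -/
theorem h1_3d_consistency {K : Type*} [Field K]
    (u ut uh v α β lam : K)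
    (vt vh uth : K)
    (h1 : (u - vt) * (ut - v) + lam - α = 0)
    (h2 : (u - vh) * (uh - v) + lam - β = 0)
    (h3 : (u - uth) * (ut - uh) + β - α = 0)
    (d1 : vt - vh ≠ 0) (d2 : uth - vh ≠ 0) (d3 : uth - vt ≠ 0) :
    v + (β - α) / (vt - vh) = uh + (lam - α) / (uth - vh) ∧
    v + (β - α) / (vt - vh) = ut + (lam - β) / (uth - vt) := by
  constructor
  · field_simp
    linear_combination (uth - u) * h1 + (u - vt + vh - uth) * h2 + (u - vt) * h3
  · field_simp
    linear_combination (-u - vt + vh + uth) * h1 + (u - uth) * h2 + (u - vh) * h3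
end

section
/- The 3-dimensional H1 open boundary reduction map φ(x₁,x₂,x₃) = (−x₁, x₂ + 2c·x₂/(2x₁x₂+2x₂x₃−c), x₃ − c/(2x₂)) satisfies: (i) x₁² is invariant, and (ii) the function I(x₁,x₂,x₃) = (x₁+x₃)(2x₂(x₁−x₃)+c)/x₁ is anti-invariant, i.e. I∘φ = −I, wherever the map and I are defined (x₁ ≠ 0, x₂ ≠ 0, 2x₁x₂+2x₂x₃−c ≠ 0, and the image coordinates are nonzero as needed). -/
/-!
Along the map, `-x₁ - x₃' = -D / (2x₂)` with `D = 2x₁x₂ + 2x₂x₃ - c` the denominator of `x₂'`,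
and `x₂' = x₂ (D + 2c) / D`; so the second factor of the numerator `(a + d)(2b(a - d) + c)` of `I`
becomes `-2x₂(x₁ + x₃)` and the numerator is invariant. Since `x₁` changes sign, `I` does too.
-/

section H1Map

variable {K : Type*} [Field K]

theorem h1_map_second_factor (c x₁ x₂ x₃ : K) (hchar : (2 : K) ≠ 0) (h2 : x₂ ≠ 0)
    (hd : 2*x₁*x₂ + 2*x₂*x₃ - c ≠ 0) :
    2 * (x₂ + 2*c*x₂ / (2*x₁*x₂ + 2*x₂*x₃ - c)) * (-x₁ - (x₃ - c/(2*x₂))) + c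
      = -(2 * x₂ * (x₁ + x₃)) := by
  have hsum : -x₁ - (x₃ - c/(2*x₂)) = -(2*x₁*x₂ + 2*x₂*x₃ - c) / (2*x₂) := by
    field_simp
    ring
  rw [hsum]
  generalize hD : 2*x₁*x₂ + 2*x₂*x₃ - c = D at hd ⊢
  field_simp
  linear_combination hD

theorem h1_map_numerator_eq (c x₁ x₂ x₃ : K) (hchar : (2 : K) ≠ 0) (h2 : x₂ ≠ 0)
    (hd : 2*x₁*x₂ + 2*x₂*x₃ - c ≠ 0) :
    (-x₁ + (x₃ - c/(2*x₂)))
        * (2 * (x₂ + 2*c*x₂ / (2*x₁*x₂ + 2*x₂*x₃ - c)) * (-x₁ - (x₃ - c/(2*x₂))) + c)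
      = (x₁ + x₃) * (2*x₂*(x₁ - x₃) + c) := by
  rw [h1_map_second_factor c x₁ x₂ x₃ hchar h2 hd]
  field_simp
  ring

end H1Map

theorem h1_3d_invariants_general {K : Type*} [Field K] (hchar : (2 : K) ≠ 0)
    (c x₁ x₂ x₃ : K) (h2 : x₂ ≠ 0)
    (hd : 2*x₁*x₂ + 2*x₂*x₃ - c ≠ 0) :
    let x₁' := -x₁
    let x₂' := x₂ + 2*c*x₂ / (2*x₁*x₂ + 2*x₂*x₃ - c)
    let x₃' := x₃ - c/(2*x₂)
    let I : K → K → K → K := fun a b d => (a + d) * (2*b*(a - d) + c) / a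
    x₁'^2 = x₁^2 ∧ I x₁' x₂' x₃' = -I x₁ x₂ x₃ := by
  intro x₁' x₂' x₃' I
  refine ⟨neg_sq x₁, ?_⟩
  change (-x₁ + x₃') * (2*x₂'*(-x₁ - x₃') + c) / -x₁ = -((x₁ + x₃) * (2*x₂*(x₁ - x₃) + c) / x₁)
  rw [h1_map_numerator_eq c x₁ x₂ x₃ hchar h2 hd, div_neg]

/-- Invariants of the 3-dimensional H1 open boundary reduction map:
`x₁²` is invariant and `I = (x₁+x₃)(2x₂(x₁-x₃)+c)/x₁` is anti-invariant. -/
theorem h1_3d_invariants {K : Type*} [Field K] (hchar : (2 : K) ≠ 0)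
    (c x₁ x₂ x₃ : K) (h1 : x₁ ≠ 0) (h2 : x₂ ≠ 0)
    (hd : 2*x₁*x₂ + 2*x₂*x₃ - c ≠ 0) :
    let x₁' := -x₁
    let x₂' := x₂ + 2*c*x₂ / (2*x₁*x₂ + 2*x₂*x₃ - c)
    let x₃' := x₃ - c/(2*x₂)
    let I : K → K → K → K := fun a b d => (a + d) * (2*b*(a - d) + c) / a
    x₁'^2 = x₁^2 ∧ I x₁' x₂' x₃' = -I x₁ x₂ x₃ :=
  h1_3d_invariants_general hchar c x₁ x₂ x₃ h2 hd
end

section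
/- The 4-dimensional H1 open boundary reduction map φ(x₁,x₂,x₃,x₄) = (−x₁, x₂ + c(x₂−x₄)/((x₂−x₄)(x₁+x₃)−c), x₃ + c/(x₄−x₂), x₄ + c(x₂−x₄)/(2x₃(x₄−x₂)+2c)) satisfies I∘φ = −I for I(x) = (x₁+x₃)(2x₃(x₄−x₂)+c)((x₂−x₄)(x₁−x₃)+c)/x₁, wherever all denominators involved are nonzero. In particular x₁·I is an invariant and x₁² is an invariant. -/
set_option maxHeartbeats 1000000 in
/-- Anti-invariance of `I` for the 4-dimensional H1 open boundary reduction,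
and invariance of `x₁·I` and `x₁²`. -/
theorem h1_4d_invariants {K : Type*} [Field K] (hchar : (2 : K) ≠ 0)
    (c x₁ x₂ x₃ x₄ : K) (h1 : x₁ ≠ 0) (h24 : x₂ - x₄ ≠ 0)
    (hd1 : (x₂ - x₄)*(x₁ + x₃) - c ≠ 0) (hd2 : x₃*(x₄ - x₂) + c ≠ 0) :
    let x₁' := -x₁
    let x₂' := x₂ + c*(x₂ - x₄) / ((x₂ - x₄)*(x₁ + x₃) - c)
    let x₃' := x₃ + c/(x₄ - x₂)
    let x₄' := x₄ + c*(x₂ - x₄) / (2*x₃*(x₄ - x₂) + 2*c)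
    let I : K → K → K → K → K := fun a b d e =>
      (a + d)*(2*d*(e - b) + c)*((b - e)*(a - d) + c)/a
    I x₁' x₂' x₃' x₄' = -I x₁ x₂ x₃ x₄ ∧
    x₁' * I x₁' x₂' x₃' x₄' = x₁ * I x₁ x₂ x₃ x₄ ∧
    x₁'^2 = x₁^2 := by
  intro x₁' x₂' x₃' x₄' I
  have h42 : x₄ - x₂ ≠ 0 := fun h => h24 (by linear_combination -h)
  have hd3 : 2*x₃*(x₄ - x₂) + 2*c ≠ 0 := by
    intro h; apply hd2
    have : (2:K) * (x₃*(x₄ - x₂) + c) = 0 := by linear_combination h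
    exact (mul_eq_zero.mp this).resolve_left hchar
  have hnum : (x₁' + x₃') * (2*x₃'*(x₄' - x₂') + c) * ((x₂' - x₄')*(x₁' - x₃') + c)
      = (x₁ + x₃)*(2*x₃*(x₄ - x₂) + c)*((x₂ - x₄)*(x₁ - x₃) + c) := by
    have hA : x₁' + x₃' = ((x₂ - x₄)*(x₁ - x₃) + c)/(x₄ - x₂) := by
      simp only [x₁', x₃']; field_simp; ring
    have hB : 2*x₃'*(x₄' - x₂') + c
        = 2*(x₃*(x₄ - x₂) + c)*(x₂ - x₄)*(x₁ + x₃)/((x₂ - x₄)*(x₁ + x₃) - c) := by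
      simp only [x₂', x₃', x₄']; field_simp; ring
    have hC : (x₂' - x₄')*(x₁' - x₃') + c
        = -(((x₂ - x₄)*(x₁ + x₃) - c)*(2*x₃*(x₄ - x₂) + c))/(2*(x₃*(x₄ - x₂) + c)) := by
      simp only [x₁', x₂', x₃', x₄']; field_simp; ring
    rw [hA, hB, hC]
    field_simp
    ring
  have key : I x₁' x₂' x₃' x₄' = -I x₁ x₂ x₃ x₄ := by
    show (x₁' + x₃')*(2*x₃'*(x₄' - x₂') + c)*((x₂' - x₄')*(x₁' - x₃') + c)/x₁'
        = -((x₁ + x₃)*(2*x₃*(x₄ - x₂) + c)*((x₂ - x₄)*(x₁ - x₃) + c)/x₁)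
    rw [hnum]
    show _ / (-x₁) = _
    rw [div_neg]
  refine ⟨key, ?_, by simp [x₁']⟩
  rw [key]; show -x₁ * -I x₁ x₂ x₃ x₄ = _; ring
end

section
/- The non-autonomous 3-dimensional H1 map φ(x₁,x₂,x₃;α₁,α₂) = (−x₁, x₂ + x₂(α₂−α₁)/(x₂(x₁+x₃)+μ−α₂), x₃ + (μ−α₂)/x₂; 2μ−α₂, 2μ−α₁) satisfies I∘φ = −I for I(x;α) = (x₂(x₁²−x₃²)+μ(x₁−x₃)−α₁x₁+α₂x₃)/x₁, wherever the denominators are nonzero. Consequently x₂(x₁²−x₃²)+μ(x₁−x₃)−α₁x₁+α₂x₃ is an invariant (being x₁·I with both factors anti-invariant). -/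
/-!
The numerator `J = x₁·I` is invariant while `x₁ ↦ -x₁`, so `I = J / x₁` changes sign.
Invariance of `J` follows from two identities of the map,
`x₂ x₃' = x₂ x₃ + μ - α₂` and `x₂' (x₁ + x₃') = x₂ (x₁ + x₃) + μ - α₁`,
which make `J'` a polynomial expression in the old variables.
-/

section

variable {K : Type*} [Field K]

def h1Numerator (μ x₁ x₂ x₃ α₁ α₂ : K) : K :=
  x₂*(x₁^2 - x₃^2) + μ*(x₁ - x₃) - α₁*x₁ + α₂*x₃

theorem h1Numerator_neg_eq {μ α₁ α₂ x₁ x₂ x₃ y₂ y₃ : K}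
    (hy₃ : x₂ * y₃ = x₂*x₃ + μ - α₂) (hy₂ : y₂ * (x₁ + y₃) = x₂*(x₁ + x₃) + μ - α₁) :
    h1Numerator μ (-x₁) y₂ y₃ (2*μ - α₂) (2*μ - α₁) = h1Numerator μ x₁ x₂ x₃ α₁ α₂ := by
  unfold h1Numerator
  linear_combination (x₁ - y₃) * hy₂ - (x₁ + x₃) * hy₃

end

theorem h1_3d_nonautonomous_general {K : Type*} [Field K]
    (μ α₁ α₂ x₁ x₂ x₃ : K) (h2 : x₂ ≠ 0)
    (hd : x₂*(x₁ + x₃) + μ - α₂ ≠ 0) :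
    let x₁' := -x₁
    let x₂' := x₂ + x₂*(α₂ - α₁)/(x₂*(x₁ + x₃) + μ - α₂)
    let x₃' := x₃ + (μ - α₂)/x₂
    let α₁' := 2*μ - α₂
    let α₂' := 2*μ - α₁
    let I : K → K → K → K → K → K := fun a b d p q =>
      (b*(a^2 - d^2) + μ*(a - d) - p*a + q*d)/a
    I x₁' x₂' x₃' α₁' α₂' = -I x₁ x₂ x₃ α₁ α₂ ∧
    x₂'*(x₁'^2 - x₃'^2) + μ*(x₁' - x₃') - α₁'*x₁' + α₂'*x₃' =
      x₂*(x₁^2 - x₃^2) + μ*(x₁ - x₃) - α₁*x₁ + α₂*x₃ := by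
  intro x₁' x₂' x₃' α₁' α₂' I
  have hx₃' : x₂ * x₃' = x₂*x₃ + μ - α₂ := by
    simp only [x₃']
    field_simp
    ring
  have hx₂' : x₂' * (x₁ + x₃') = x₂*(x₁ + x₃) + μ - α₁ := by
    simp only [x₂', x₃']
    field_simp
    ring
  have hJ : h1Numerator μ x₁' x₂' x₃' α₁' α₂' = h1Numerator μ x₁ x₂ x₃ α₁ α₂ :=
    h1Numerator_neg_eq hx₃' hx₂'
  refine ⟨?_, hJ⟩
  change h1Numerator μ x₁' x₂' x₃' α₁' α₂' / -x₁ = -(h1Numerator μ x₁ x₂ x₃ α₁ α₂ / x₁)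
  rw [hJ, div_neg]

/-- Anti-invariance of `I` for the non-autonomous 3-dimensional H1 map,
with parameter update `(α₁,α₂) ↦ (2μ-α₂, 2μ-α₁)`, and the resulting invariant. -/
theorem h1_3d_nonautonomous {K : Type*} [Field K] (hchar : (2 : K) ≠ 0)
    (μ α₁ α₂ x₁ x₂ x₃ : K) (h1 : x₁ ≠ 0) (h2 : x₂ ≠ 0)
    (hd : x₂*(x₁ + x₃) + μ - α₂ ≠ 0) :
    let x₁' := -x₁
    let x₂' := x₂ + x₂*(α₂ - α₁)/(x₂*(x₁ + x₃) + μ - α₂)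
    let x₃' := x₃ + (μ - α₂)/x₂
    let α₁' := 2*μ - α₂
    let α₂' := 2*μ - α₁
    let I : K → K → K → K → K → K := fun a b d p q =>
      (b*(a^2 - d^2) + μ*(a - d) - p*a + q*d)/a
    I x₁' x₂' x₃' α₁' α₂' = -I x₁ x₂ x₃ α₁ α₂ ∧
    x₂'*(x₁'^2 - x₃'^2) + μ*(x₁' - x₃') - α₁'*x₁' + α₂'*x₃' =
      x₂*(x₁^2 - x₃^2) + μ*(x₁ - x₃) - α₁*x₁ + α₂*x₃ :=
  h1_3d_nonautonomous_general μ α₁ α₂ x₁ x₂ x₃ h2 hd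
end

section
/- The planar map δ(y₁,y₂) = (y₂, −(a²y₁ − 2a²y₂ + y₁y₂²)/(a² − 2y₁y₂ + y₂²)) preserves the function R(y₁,y₂) = (a² − y₁y₂)/(y₁ − y₂), i.e. R(δ(y)) = R(y) whenever y₁ ≠ y₂, a² − 2y₁y₂ + y₂² ≠ 0, and the denominator of R(δ(y)) is nonzero. -/
/-!
Write `z` for the second coordinate of `δ(y₁, y₂)` and `D = a² - 2y₁y₂ + y₂²`. Clearing `D` gives
`a² - y₂z = (a² - y₁y₂)(a² - y₂²)/D` and `y₂ - z = (y₁ - y₂)(a² - y₂²)/D`, so `R(y₂, z)` is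
`R(y₁, y₂)` with the common factor `(a² - y₂²)/D` cancelled; that factor is nonzero because
`y₂ - z` is.
-/

namespace H1Delta

variable {K : Type*} [Field K]

def deltaSnd (a y₁ y₂ : K) : K :=
  -(a^2*y₁ - 2*a^2*y₂ + y₁*y₂^2)/(a^2 - 2*y₁*y₂ + y₂^2)

variable {a y₁ y₂ : K}

theorem deltaSnd_mul_den (hden : a^2 - 2*y₁*y₂ + y₂^2 ≠ 0) :
    deltaSnd a y₁ y₂ * (a^2 - 2*y₁*y₂ + y₂^2) = -(a^2*y₁ - 2*a^2*y₂ + y₁*y₂^2) :=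
  div_mul_cancel₀ _ hden

theorem sq_sub_mul_deltaSnd (hden : a^2 - 2*y₁*y₂ + y₂^2 ≠ 0) :
    a^2 - y₂ * deltaSnd a y₁ y₂ = (a^2 - y₁*y₂) * (a^2 - y₂^2) / (a^2 - 2*y₁*y₂ + y₂^2) := by
  rw [eq_div_iff hden]
  linear_combination (-y₂) * deltaSnd_mul_den hden

theorem sub_deltaSnd (hden : a^2 - 2*y₁*y₂ + y₂^2 ≠ 0) :
    y₂ - deltaSnd a y₁ y₂ = (y₁ - y₂) * (a^2 - y₂^2) / (a^2 - 2*y₁*y₂ + y₂^2) := by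
  rw [eq_div_iff hden]
  linear_combination (-1 : K) * deltaSnd_mul_den hden

end H1Delta

open H1Delta in
theorem h1_planar_delta_invariant_general {K : Type*} [Field K]
    (a y₁ y₂ : K)
    (hden : a^2 - 2*y₁*y₂ + y₂^2 ≠ 0)
    (hden' : y₂ - (-(a^2*y₁ - 2*a^2*y₂ + y₁*y₂^2)/(a^2 - 2*y₁*y₂ + y₂^2)) ≠ 0) :
    let R : K → K → K := fun u v => (a^2 - u*v)/(u - v)
    R y₂ (-(a^2*y₁ - 2*a^2*y₂ + y₁*y₂^2)/(a^2 - 2*y₁*y₂ + y₂^2)) = R y₁ y₂ := by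
  change (a^2 - y₂ * deltaSnd a y₁ y₂) / (y₂ - deltaSnd a y₁ y₂) = (a^2 - y₁*y₂) / (y₁ - y₂)
  change y₂ - deltaSnd a y₁ y₂ ≠ 0 at hden'
  rw [sub_deltaSnd hden] at hden' ⊢
  have hfactor : a^2 - y₂^2 ≠ 0 := right_ne_zero_of_mul (div_ne_zero_iff.mp hden').1
  rw [sq_sub_mul_deltaSnd hden, div_div_div_cancel_right₀ hden, mul_div_mul_right _ _ hfactor]

/-- The planar map `δ(y₁,y₂) = (y₂, -(a²y₁-2a²y₂+y₁y₂²)/(a²-2y₁y₂+y₂²))`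
preserves `R(y₁,y₂) = (a²-y₁y₂)/(y₁-y₂)`. -/
theorem h1_planar_delta_invariant {K : Type*} [Field K]
    (a y₁ y₂ : K) (h12 : y₁ ≠ y₂)
    (hden : a^2 - 2*y₁*y₂ + y₂^2 ≠ 0)
    (hden' : y₂ - (-(a^2*y₁ - 2*a^2*y₂ + y₁*y₂^2)/(a^2 - 2*y₁*y₂ + y₂^2)) ≠ 0) :
    let R : K → K → K := fun u v => (a^2 - u*v)/(u - v)
    R y₂ (-(a^2*y₁ - 2*a^2*y₂ + y₁*y₂^2)/(a^2 - 2*y₁*y₂ + y₂^2)) = R y₁ y₂ :=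
  h1_planar_delta_invariant_general a y₁ y₂ hden hden'
end

section
/- For the Q1(δ=0) equation in the form (1/α²)(u−û)(ũ−ũ̂) − (1/β²)(u−ũ)(û−ũ̂) = 0, the Lax matrix L(x,y;α,λ) = (1/(α²(x−y)))·[[α²(x−y)−λ²x, λ²xy],[−λ², α²(x−y)+λ²y]] satisfies L(x,y;α,λ)·L(y,x;α,λ) = (1 − λ²/α²)·Id whenever x ≠ y and α ≠ 0. -/
open Matrix

/-- The Q1(δ=0) Lax matrix satisfies `L(x,y;α,λ)·L(y,x;α,λ) = (1-λ²/α²)·Id`. -/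
theorem q1_lax_identity {K : Type*} [Field K]
    (x y α lam : K) (hxy : x ≠ y) (hα : α ≠ 0) :
    let L : K → K → Matrix (Fin 2) (Fin 2) K := fun a b =>
      (1/(α^2*(a - b))) •
        !![α^2*(a - b) - lam^2*a, lam^2*a*b; -lam^2, α^2*(a - b) + lam^2*b]
    L x y * L y x = (1 - lam^2/α^2) • (1 : Matrix (Fin 2) (Fin 2) K) := by
  intro L
  have hxy' : x - y ≠ 0 := sub_ne_zero.mpr hxy
  have hyx' : y - x ≠ 0 := sub_ne_zero.mpr (Ne.symm hxy)
  have hd1 : α^2*(x - y) ≠ 0 := mul_ne_zero (pow_ne_zero _ hα) hxy'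
  have hd2 : α^2*(y - x) ≠ 0 := mul_ne_zero (pow_ne_zero _ hα) hyx'
  have key :
      !![α^2*(x - y) - lam^2*x, lam^2*x*y; -lam^2, α^2*(x - y) + lam^2*y] *
      !![α^2*(y - x) - lam^2*y, lam^2*y*x; -lam^2, α^2*(y - x) + lam^2*x] =
      ((α^2*(x - y)) * (α^2*(y - x))) • ((1 - lam^2/α^2) • (1 : Matrix (Fin 2) (Fin 2) K)) := by
    ext i j
    fin_cases i <;> fin_cases j <;>
      simp [Matrix.mul_apply, Fin.sum_univ_two, Matrix.one_apply] <;>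
      (try field_simp) <;> ring
  show (1/(α^2*(x - y))) •
      !![α^2*(x - y) - lam^2*x, lam^2*x*y; -lam^2, α^2*(x - y) + lam^2*y] *
      ((1/(α^2*(y - x))) •
      !![α^2*(y - x) - lam^2*y, lam^2*y*x; -lam^2, α^2*(y - x) + lam^2*x]) = _
  rw [Matrix.smul_mul, Matrix.mul_smul, key, smul_smul, smul_smul, smul_smul]
  congr 1
  field_simp
end

section
/- The iterates of the 2-dimensional Q1(δ=0) open boundary reduction map φ(x₁,x₂) = ((x₁+(c²−1)x₂)/c², x₂(x₁+(c²−1)x₂)/(c²x₁)) satisfy φᴺ(x₁,x₂) = (x₁·rᴺ, x₂·rᴺ) where r = (x₁+(c²−1)x₂)/(c²x₁), for all N ≥ 0, provided x₁ ≠ 0, c ≠ 0 and all intermediate first coordinates are nonzero. In particular the ratio x₁/x₂ is invariant under φ (assuming x₂ ≠ 0). -/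
/-!
The map is homogeneous of degree one, `φ (s • p) = s • φ p`, and where `p.1 ≠ 0` it is the
scaling `φ p = r p • p`. Hence `φ^[n+1] p = φ (r^n • p) = r^n • φ p = r^(n+1) • p`, and a
nonzero scaling fixes ratios.
-/

namespace Q1Reduction

variable {K : Type*} [Field K]

def map (c : K) (p : K × K) : K × K :=
  ((p.1 + (c^2 - 1)*p.2)/c^2, p.2*(p.1 + (c^2 - 1)*p.2)/(c^2*p.1))

def scale (c : K) (p : K × K) : K :=
  (p.1 + (c^2 - 1)*p.2)/(c^2*p.1)

theorem map_smul (c s : K) (p : K × K) : map c (s • p) = s • map c p := by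
  rcases eq_or_ne s 0 with rfl | hs
  · simp [map]
  · ext
    · simp only [map, Prod.smul_fst, Prod.smul_snd, smul_eq_mul]
      ring
    · simp only [map, Prod.smul_fst, Prod.smul_snd, smul_eq_mul]
      rw [show s * p.2 * (s * p.1 + (c ^ 2 - 1) * (s * p.2)) =
          s * (s * (p.2 * (p.1 + (c ^ 2 - 1) * p.2))) by ring,
        show c ^ 2 * (s * p.1) = s * (c ^ 2 * p.1) by ring, mul_div_mul_left _ _ hs, mul_div_assoc]

theorem map_eq_scale_smul (c : K) {p : K × K} (hp : p.1 ≠ 0) : map c p = scale c p • p := by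
  ext <;> simp only [map, scale, Prod.smul_fst, Prod.smul_snd, smul_eq_mul] <;> field_simp

theorem iterate_map (c : K) {p : K × K} (hp : p.1 ≠ 0) (N : ℕ) :
    (map c)^[N] p = scale c p ^ N • p := by
  induction N with
  | zero => simp
  | succ n ih =>
    rw [Function.iterate_succ_apply', ih, map_smul, map_eq_scale_smul c hp, smul_smul, pow_succ]

theorem map_fst_div_map_snd {c : K} (hc : c ≠ 0) {p : K × K} (hp : p.1 ≠ 0)
    (hL : p.1 + (c^2 - 1)*p.2 ≠ 0) : (map c p).1 / (map c p).2 = p.1 / p.2 := by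
  have hr : scale c p ≠ 0 := div_ne_zero hL (mul_ne_zero (pow_ne_zero 2 hc) hp)
  rw [map_eq_scale_smul c hp, Prod.smul_fst, Prod.smul_snd, smul_eq_mul, smul_eq_mul,
    mul_div_mul_left _ _ hr]

end Q1Reduction

/-- Iterates of the 2-dimensional Q1(δ=0) open boundary reduction map:
`φᴺ(x₁,x₂) = (x₁ rᴺ, x₂ rᴺ)` with `r = (x₁+(c²-1)x₂)/(c²x₁)`, and invariance
of the ratio `x₁/x₂`. -/
theorem q1_2d_iterates {K : Type*} [Field K] (c : K) (hc : c ≠ 0) :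
    let φ : K × K → K × K := fun p =>
      ((p.1 + (c^2 - 1)*p.2)/c^2, p.2*(p.1 + (c^2 - 1)*p.2)/(c^2*p.1))
    ∀ (x₁ x₂ : K) (N : ℕ), x₁ ≠ 0 →
      (∀ k < N, (φ^[k] (x₁, x₂)).1 ≠ 0) →
      φ^[N] (x₁, x₂) = (x₁ * ((x₁ + (c^2 - 1)*x₂)/(c^2*x₁))^N,
                        x₂ * ((x₁ + (c^2 - 1)*x₂)/(c^2*x₁))^N) ∧
      (x₂ ≠ 0 → x₁ + (c^2 - 1)*x₂ ≠ 0 →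
        (φ (x₁, x₂)).1 / (φ (x₁, x₂)).2 = x₁ / x₂) := by
  intro φ x₁ x₂ N hx₁ _
  refine ⟨?_, fun _ hL => Q1Reduction.map_fst_div_map_snd hc hx₁ hL⟩
  rw [show φ = Q1Reduction.map c from rfl, Q1Reduction.iterate_map c hx₁, Prod.smul_mk,
    smul_eq_mul, smul_eq_mul, mul_comm _ x₁, mul_comm _ x₂]
  rfl
end

section
/- The non-autonomous map ψ(z₁,z₂,c₁,c₂) = ( z₁(1+c₂²z₂)(c₂²z₂(1+z₂)+c₁²(z₁+c₂²z₁z₂))/((1+z₂)(z₁+z₂+c₂²z₁z₂+z₂²)), z₂(c₂²z₂(1+z₂)+c₁²(z₁+c₂²z₁z₂))/(z₁+z₂+c₂²z₁z₂+z₂²), 1/c₂, 1/c₁ ) preserves the function C(z₁,z₂,c₁,c₂) = (c₂²z₂²(1+z₁+z₂) + c₁²z₁(z₁+c₂²z₁z₂+c₂²z₂²))/(c₂²z₁z₂), i.e. C∘ψ = C wherever all denominators are nonzero. -/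
private lemma C_split {K : Type*} [Field K] (a b p q : K)
    (ha : a ≠ 0) (hb : b ≠ 0) (hp : p ≠ 0) (hq : q ≠ 0) :
    (q^2*b^2*(1 + a + b) + p^2*a*(a + q^2*a*b + q^2*b^2))/(q^2*a*b)
    = (b/a)*(1 + a + b) + (p^2/q^2)*(a/b) + p^2*(a + b) := by
  field_simp
  ring

/-- The non-autonomous reduced map `ψ` preserves
`C(z₁,z₂,c₁,c₂) = (c₂²z₂²(1+z₁+z₂) + c₁²z₁(z₁+c₂²z₁z₂+c₂²z₂²))/(c₂²z₁z₂)`,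
evaluated after the parameter update `(c₁,c₂) ↦ (1/c₂,1/c₁)`. -/
theorem q1_3d_reduced_invariant {K : Type*} [Field K]
    (z₁ z₂ c₁ c₂ : K) (h1 : z₁ ≠ 0) (h2 : z₂ ≠ 0) (hc1 : c₁ ≠ 0) (hc2 : c₂ ≠ 0)
    (hz2 : 1 + z₂ ≠ 0) (hden : z₁ + z₂ + c₂^2*z₁*z₂ + z₂^2 ≠ 0)
    (hn1 : z₁*(1 + c₂^2*z₂)*(c₂^2*z₂*(1 + z₂) + c₁^2*(z₁ + c₂^2*z₁*z₂)) ≠ 0)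
    (hn2 : z₂*(c₂^2*z₂*(1 + z₂) + c₁^2*(z₁ + c₂^2*z₁*z₂)) ≠ 0) :
    let C : K → K → K → K → K := fun a b p q =>
      (q^2*b^2*(1 + a + b) + p^2*a*(a + q^2*a*b + q^2*b^2))/(q^2*a*b)
    C (z₁*(1 + c₂^2*z₂)*(c₂^2*z₂*(1 + z₂) + c₁^2*(z₁ + c₂^2*z₁*z₂)) /
        ((1 + z₂)*(z₁ + z₂ + c₂^2*z₁*z₂ + z₂^2)))
      (z₂*(c₂^2*z₂*(1 + z₂) + c₁^2*(z₁ + c₂^2*z₁*z₂)) /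
        (z₁ + z₂ + c₂^2*z₁*z₂ + z₂^2))
      (1/c₂) (1/c₁) = C z₁ z₂ c₁ c₂ := by
  intro C
  simp only [C]
  set D : K := z₁ + z₂ + c₂^2*z₁*z₂ + z₂^2 with hD
  set E : K := c₂^2*z₂*(1 + z₂) + c₁^2*(z₁ + c₂^2*z₁*z₂) with hE
  have hEne : E ≠ 0 := right_ne_zero_of_mul hn2
  have hcz : (1 : K) + c₂^2*z₂ ≠ 0 := by
    intro h
    exact hn1 (by rw [show z₁*(1 + c₂^2*z₂) = 0 by rw [h, mul_zero], zero_mul])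
  set a : K := z₁*(1 + c₂^2*z₂)*E / ((1 + z₂)*D) with ha
  set b : K := z₂*E/D with hb
  have hane : a ≠ 0 := div_ne_zero hn1 (mul_ne_zero hz2 hden)
  have hbne : b ≠ 0 := div_ne_zero hn2 hden
  rw [C_split a b (1/c₂) (1/c₁) hane hbne (one_div_ne_zero hc2) (one_div_ne_zero hc1)]
  have hba : b/a = z₂*(1+z₂)/(z₁*(1 + c₂^2*z₂)) := by
    rw [ha, hb, div_div_div_comm, mul_div_mul_right _ _ hEne,
      mul_comm (1+z₂) D, div_mul_cancel_left₀ hden, div_eq_mul_inv _ ((1+z₂)⁻¹),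
      inv_inv, div_mul_eq_mul_div]
  have hab : a/b = z₁*(1 + c₂^2*z₂)/(z₂*(1+z₂)) := by
    rw [ha, hb, div_div_div_comm, mul_div_mul_right _ _ hEne,
      mul_div_cancel_right₀ _ hden, div_div]
  have hsum : a + b = E/(1+z₂) := by
    rw [ha, hb, div_add_div _ _ (mul_ne_zero hz2 hden) hden,
      div_eq_div_iff (mul_ne_zero (mul_ne_zero hz2 hden) hden) hz2, hD]
    ring
  have h1ab : 1 + a + b = (1 + c₂^2*z₂)*(1 + z₂ + c₁^2*z₁)/(1+z₂) := by
    rw [add_assoc, hsum, hE]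
    field_simp
    ring
  rw [h1ab, hba, hab, hsum, hE]
  have hz1c : z₁*(1 + c₂^2*z₂) ≠ 0 := mul_ne_zero h1 hcz
  have hz2z : z₂*(1+z₂) ≠ 0 := mul_ne_zero h2 hz2
  have e1 : (1/c₂:K)^2/(1/c₁)^2 = c₁^2/c₂^2 := by
    field_simp
  have e2 : (1/c₂:K)^2 = 1/c₂^2 := by rw [div_pow, one_pow]
  rw [e1, e2, div_mul_div_comm, one_div_mul_eq_div, div_div]
  have hX : z₁*(1 + c₂^2*z₂)*(1+z₂) ≠ 0 := mul_ne_zero (mul_ne_zero h1 hcz) hz2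
  have hY : c₂^2*(z₂*(1+z₂)) ≠ 0 :=
    mul_ne_zero (pow_ne_zero 2 hc2) (mul_ne_zero h2 hz2)
  have hZ : (1+z₂)*c₂^2 ≠ 0 := mul_ne_zero hz2 (pow_ne_zero 2 hc2)
  have hS : c₂^2*z₁*z₂ ≠ 0 := mul_ne_zero (mul_ne_zero (pow_ne_zero 2 hc2) h1) h2
  rw [div_mul_div_comm]
  rw [div_add_div _ _ hX hY, div_add_div _ _ (mul_ne_zero hX hY) hZ,
    div_eq_div_iff (mul_ne_zero (mul_ne_zero hX hY) hZ) hS]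
  ring
end

section
/- Suppose Q(x,y,c,z) is affine-linear in each argument, written Q = Q₁cz + Q₂c + Q₃z + Q₄ with Qⱼ = Qⱼ(x,y) polynomials, and suppose q(x,y,z) = q₁(x,y)z + q₂(x,y) is affine-linear in z. Let p(y,x,c) = p₁(y,x)c + p₂(y,x) be a polynomial such that q₁·Q(x,y,c,−q₂/q₁) = χ(x,y)·p(y,x,c) for some polynomial χ, i.e. the substitution z = −q₂/q₁ into Q, cleared of denominators, factors through p. Then substituting c = −p₂/p₁ into Q gives back a multiple of q. Specifically, p₁·Q(x,y,−p₂/p₁,z) vanishes whenever q(x,y,z) = 0 and χ(x,y)·p₁(y,x) ≠ 0. Moreover, p₁·Q(x,y,−p₂/p₁,z), viewed as a polynomial linear in z, is divisible by q₁z+q₂ as a rational function identity: −(Q₁z+Q₂)p₂ + (Q₃z+Q₄)p₁ vanishes at z = −q₂/q₁. -/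
/-- Part (b) of the Duality Lemma: if
`-(Q₁c+Q₃)q₂ + (Q₂c+Q₄)q₁ = χ·(p₁c+p₂)` identically, then substituting
`c = -p₂/p₁` into `Q` gives back a multiple of `q`. -/
theorem duality_lemma_b {K : Type*} [Field K]
    (Q₁ Q₂ Q₃ Q₄ q₁ q₂ χ p₁ p₂ : K → K → K)
    (hfact : ∀ x y c,
      -(Q₁ x y * c + Q₃ x y) * q₂ x y + (Q₂ x y * c + Q₄ x y) * q₁ x y =
        χ x y * (p₁ y x * c + p₂ y x)) :
    (∀ x y z, q₁ x y ≠ 0 → q₁ x y * z + q₂ x y = 0 →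
      χ x y * p₁ y x ≠ 0 →
      -(Q₁ x y * z + Q₂ x y) * p₂ y x + (Q₃ x y * z + Q₄ x y) * p₁ y x = 0) ∧
    (∀ x y,
      -(-(Q₁ x y) * q₂ x y + Q₂ x y * q₁ x y) * p₂ y x +
        (-(Q₃ x y) * q₂ x y + Q₄ x y * q₁ x y) * p₁ y x = 0) := by
  constructor
  · intro x y z hq1 hz _
    have h0 := hfact x y 0
    have h1 := hfact x y 1
    have hA : -(Q₁ x y) * q₂ x y + Q₂ x y * q₁ x y = χ x y * p₁ y x := by
      linear_combination h1 - h0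
    have hB : -(Q₃ x y) * q₂ x y + Q₄ x y * q₁ x y = χ x y * p₂ y x := by
      linear_combination h0
    have key : q₁ x y *
        (-(Q₁ x y * z + Q₂ x y) * p₂ y x + (Q₃ x y * z + Q₄ x y) * p₁ y x) = 0 := by
      linear_combination (Q₃ x y * p₁ y x - Q₁ x y * p₂ y x) * hz
        + (-(p₂ y x)) * hA + p₁ y x * hB
    exact (mul_eq_zero.mp key).resolve_left hq1
  · intro x y
    have h0 := hfact x y 0
    have h1 := hfact x y 1
    linear_combination (-(p₂ y x)) * (h1 - h0) + p₁ y x * h0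
end
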